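/- Let M be a pointed metric space such that for every real Banach space Y the pair (M, Y) has the Lip-BPB property. Then there exists a single function η_M : (0,∞) → (0,∞), with η_M(ε) > 0 for all ε > 0 and depending only on M, such that for every real Banach space Y the pair (M, Y) has the Lip-BPB property witnessed by the function η_M. -/

import Mathlib

/-!
Suppose no single `δ > 0` works for a given `ε` uniformly in `Y`. Then for every `n` there is a
Banach space `Yₙ` in which `δ = 1/(n+1)` fails, and the Lip-BPB property of the `ℓ∞`-sum
`Y = (⊕ₙ Yₙ)_∞` yields some `η(ε)`. Pick `n` with `1/(n+1) < η(ε)`, embed the bad map of `Yₙ` into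
the `n`-th coordinate of `Y` and approximate it there by a norm-attaining `G`. Since `G` is
`ε`-close to a map living in coordinate `n`, all other coordinates of `G r - G s` have norm
`< dist r s = ‖G r - G s‖`, so the `n`-th coordinate of `G` attains its norm at `(r, s)` and is
an approximation in `Yₙ`, a contradiction.
-/

open Set Metric NNReal MeasureTheory

/-- A Lipschitz map vanishing at the base point `z`, i.e. an element of `Lip₀(M,Y)`. -/
def IsLip0 {M Y : Type*} [MetricSpace M] [NormedAddCommGroup Y]
    (z : M) (F : M → Y) : Prop :=
  (∃ K : ℝ≥0, LipschitzWith K F) ∧ F z = 0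

/-- The Lipschitz norm `‖F‖_L = sup {‖F p - F q‖ / d(p,q) : p ≠ q}`. -/
noncomputable def lipNorm {M Y : Type*} [MetricSpace M] [NormedAddCommGroup Y]
    (F : M → Y) : ℝ :=
  sSup {r : ℝ | ∃ p q : M, p ≠ q ∧ r = ‖F p - F q‖ / dist p q}

/-- `F` strongly attains its norm. -/
def StronglyAttains {M Y : Type*} [MetricSpace M] [NormedAddCommGroup Y]
    (F : M → Y) : Prop :=
  ∃ p q : M, p ≠ q ∧ ‖F p - F q‖ = lipNorm F * dist p q

/-- `F` is Lipschitz compact: its Lipschitz image is relatively compact. -/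
def IsLipCompact {M Y : Type*} [MetricSpace M] [NormedAddCommGroup Y] [NormedSpace ℝ Y]
    (F : M → Y) : Prop :=
  IsCompact (closure {y : Y | ∃ p q : M, p ≠ q ∧ y = (dist p q)⁻¹ • (F p - F q)})

/-- The pair `(M,Y)` has the Lip-BPB property witnessed by the function `η`. -/
def LipBPBWith (M : Type*) [MetricSpace M] (z : M)
    (Y : Type*) [NormedAddCommGroup Y] (η : ℝ → ℝ) : Prop :=
  (∀ ε > 0, η ε > 0) ∧
  ∀ ε > 0, ∀ F : M → Y, IsLip0 z F → lipNorm F = 1 →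
    ∀ p q : M, p ≠ q → ‖F p - F q‖ > (1 - η ε) * dist p q →
      ∃ G : M → Y, IsLip0 z G ∧ ∃ r s : M, r ≠ s ∧
        ‖G r - G s‖ = dist r s ∧ lipNorm G = 1 ∧
        lipNorm (fun x => G x - F x) < ε ∧
        (dist p r + dist q s) / dist p q < ε

/-- The pair `(M,Y)` has the Lip-BPB property. -/
def LipBPB (M : Type*) [MetricSpace M] (z : M)
    (Y : Type*) [NormedAddCommGroup Y] : Prop :=
  ∃ η : ℝ → ℝ, LipBPBWith M z Y η

/-- The pair `(M,Y)` has the Lip-BPB property for Lipschitz compact maps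
witnessed by the function `η`. -/
def LipBPBCompactWith (M : Type*) [MetricSpace M] (z : M)
    (Y : Type*) [NormedAddCommGroup Y] [NormedSpace ℝ Y] (η : ℝ → ℝ) : Prop :=
  (∀ ε > 0, η ε > 0) ∧
  ∀ ε > 0, ∀ F : M → Y, IsLip0 z F → IsLipCompact F → lipNorm F = 1 →
    ∀ p q : M, p ≠ q → ‖F p - F q‖ > (1 - η ε) * dist p q →
      ∃ G : M → Y, IsLip0 z G ∧ IsLipCompact G ∧ ∃ r s : M, r ≠ s ∧
        ‖G r - G s‖ = dist r s ∧ lipNorm G = 1 ∧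
        lipNorm (fun x => G x - F x) < ε ∧
        (dist p r + dist q s) / dist p q < ε

/-- The pair `(M,Y)` has the Lip-BPB property for Lipschitz compact maps. -/
def LipBPBCompact (M : Type*) [MetricSpace M] (z : M)
    (Y : Type*) [NormedAddCommGroup Y] [NormedSpace ℝ Y] : Prop :=
  ∃ η : ℝ → ℝ, LipBPBCompactWith M z Y η

/-- `SA(M,Y)` is dense in `Lip₀(M,Y)`. -/
def SADense (M : Type*) [MetricSpace M] (z : M)
    (Y : Type*) [NormedAddCommGroup Y] : Prop :=
  ∀ F : M → Y, IsLip0 z F → ∀ ε > 0,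
    ∃ G : M → Y, IsLip0 z G ∧ StronglyAttains G ∧ lipNorm (fun x => G x - F x) < ε

/-- `SA_K(M,Y)` is dense in `Lipc(M,Y)`. -/
def SAKDense (M : Type*) [MetricSpace M] (z : M)
    (Y : Type*) [NormedAddCommGroup Y] [NormedSpace ℝ Y] : Prop :=
  ∀ F : M → Y, IsLip0 z F → IsLipCompact F → ∀ ε > 0,
    ∃ G : M → Y, IsLip0 z G ∧ IsLipCompact G ∧ StronglyAttains G ∧
      lipNorm (fun x => G x - F x) < ε

universe u

open scoped ENNReal

section LipNorm

variable {M Y Z : Type*} [MetricSpace M] [NormedAddCommGroup Y] [NormedAddCommGroup Z]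

lemma lipNorm_nonneg (F : M → Y) : 0 ≤ lipNorm F :=
  Real.sSup_nonneg (by rintro r ⟨p, q, -, rfl⟩; positivity)

lemma lipNorm_le_of_forall {F : M → Y} {C : ℝ} (hC : 0 ≤ C)
    (h : ∀ p q : M, ‖F p - F q‖ ≤ C * dist p q) : lipNorm F ≤ C := by
  refine Real.sSup_le ?_ hC
  rintro r ⟨p, q, hpq, rfl⟩
  rw [div_le_iff₀ (dist_pos.2 hpq)]
  exact h p q

lemma LipschitzWith.norm_sub_div_dist_le_lipNorm {F : M → Y} {K : ℝ≥0} (hF : LipschitzWith K F)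
    {p q : M} (hpq : p ≠ q) : ‖F p - F q‖ / dist p q ≤ lipNorm F := by
  refine le_csSup ⟨K, ?_⟩ ⟨p, q, hpq, rfl⟩
  rintro r ⟨p, q, hpq, rfl⟩
  rw [div_le_iff₀ (dist_pos.2 hpq), ← dist_eq_norm]
  exact hF.dist_le_mul p q

lemma LipschitzWith.norm_sub_le_lipNorm_mul {F : M → Y} {K : ℝ≥0} (hF : LipschitzWith K F)
    (p q : M) : ‖F p - F q‖ ≤ lipNorm F * dist p q := by
  rcases eq_or_ne p q with rfl | hpq
  · simp
  · rw [← div_le_iff₀ (dist_pos.2 hpq)]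
    exact hF.norm_sub_div_dist_le_lipNorm hpq

lemma LipschitzWith.lipNorm_comp_le {T : Y → Z} (hT : LipschitzWith 1 T) {F : M → Y} {K : ℝ≥0}
    (hF : LipschitzWith K F) : lipNorm (T ∘ F) ≤ lipNorm F :=
  lipNorm_le_of_forall (lipNorm_nonneg F) fun p q => calc
    ‖T (F p) - T (F q)‖ ≤ ‖F p - F q‖ := by simpa [dist_eq_norm] using hT.dist_le_mul (F p) (F q)
    _ ≤ lipNorm F * dist p q := hF.norm_sub_le_lipNorm_mul p q

lemma Isometry.lipNorm_comp {T : Y → Z} (hT : Isometry T) (F : M → Y) :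
    lipNorm (T ∘ F) = lipNorm F := by
  simp only [lipNorm, Function.comp_apply, ← dist_eq_norm, hT.dist_eq]

lemma IsLip0.comp {T : Y → Z} {K : ℝ≥0} (hT : LipschitzWith K T) (hT0 : T 0 = 0) {z : M}
    {F : M → Y} (hF : IsLip0 z F) : IsLip0 z (T ∘ F) := by
  obtain ⟨⟨L, hL⟩, hFz⟩ := hF
  exact ⟨⟨K * L, hT.comp hL⟩, by simp [hFz, hT0]⟩

end LipNorm

namespace lp

variable {ι : Type*} {E : ι → Type*} [∀ i, NormedAddCommGroup (E i)]

lemma norm_apply_eq_norm_of_forall_ne_le {x : lp E ∞} {n : ι} {c : ℝ} (hc : c < ‖x‖)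
    (h : ∀ j, j ≠ n → ‖x j‖ ≤ c) : ‖x n‖ = ‖x‖ := by
  have hle : ‖x‖ ≤ max ‖x n‖ c := by
    refine norm_le_of_forall_le ((norm_nonneg _).trans (le_max_left _ _)) fun j => ?_
    rcases eq_or_ne j n with rfl | hj
    · exact le_max_left _ _
    · exact (h j hj).trans (le_max_right _ _)
  refine le_antisymm (norm_apply_le_norm ENNReal.top_ne_zero x n) ?_
  rcases le_max_iff.1 hle with h' | h'
  · exact h'
  · exact absurd h' (not_le.2 hc)

end lp

section LipBPB

variable {M : Type*} [MetricSpace M] {Y : Type*} [NormedAddCommGroup Y]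

def LipBPBApprox (z : M) (ε : ℝ) (F : M → Y) (p q : M) : Prop :=
  ∃ G : M → Y, IsLip0 z G ∧ ∃ r s : M, r ≠ s ∧
    ‖G r - G s‖ = dist r s ∧ lipNorm G = 1 ∧
    lipNorm (fun x => G x - F x) < ε ∧
    (dist p r + dist q s) / dist p q < ε

variable (M) in
/-- The Lip-BPB property of `(M, Y)` for one `ε` with one value `δ = η(ε)`, so that
`LipBPBWith M z Y η` unfolds to `∀ ε > 0, LipBPBAt M z Y ε (η ε)` plus positivity of `η`. -/
def LipBPBAt (z : M) (Y : Type*) [NormedAddCommGroup Y] (ε δ : ℝ) : Prop :=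
  ∀ F : M → Y, IsLip0 z F → lipNorm F = 1 →
    ∀ p q : M, p ≠ q → ‖F p - F q‖ > (1 - δ) * dist p q → LipBPBApprox z ε F p q

variable {z : M}

lemma LipBPBApprox.mono {ε ε' : ℝ} {F : M → Y} {p q : M} (h : LipBPBApprox z ε F p q)
    (hε : ε ≤ ε') : LipBPBApprox z ε' F p q := by
  obtain ⟨G, hG, r, s, hrs, hGrs, hGnorm, hGF, hdist⟩ := h
  exact ⟨G, hG, r, s, hrs, hGrs, hGnorm, hGF.trans_le hε, hdist.trans_le hε⟩

lemma LipBPBAt.mono {ε ε' δ δ' : ℝ} (h : LipBPBAt M z Y ε δ) (hε : ε ≤ ε') (hδ : δ' ≤ δ) :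
    LipBPBAt M z Y ε' δ' := fun F hF hFnorm p q hpq hFpq =>
  (h F hF hFnorm p q hpq <| lt_of_le_of_lt
    (mul_le_mul_of_nonneg_right (by linarith) dist_nonneg) hFpq).mono hε

variable {ι : Type*} [DecidableEq ι] {E : ι → Type*} [∀ i, NormedAddCommGroup (E i)]

lemma LipBPBApprox.of_lp_single {n : ι} {F : M → E n} {K : ℝ≥0} (hF : LipschitzWith K F)
    {ε : ℝ} (hε : ε ≤ 1) {p q : M} (h : LipBPBApprox z ε (fun x => lp.single ∞ n (F x)) p q) :
    LipBPBApprox z ε F p q := by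
  obtain ⟨G, ⟨⟨KG, hKG⟩, hGz⟩, r, s, hrs, hGrs, hGnorm, hGF, hdist⟩ := h
  set D : M → lp E ∞ := fun x => G x - lp.single ∞ n (F x)
  have hD : LipschitzWith (KG + K) D := by
    simpa using hKG.sub ((lp.isometry_single n).lipschitz.comp hF)
  have heval := lp.lipschitzWith_one_eval (E := E) ∞ n
  have hHF : (fun x => G x n - F x) = (fun y : lp E ∞ => y n) ∘ D := by
    funext x
    simp [D]
  have hoff : ∀ j, j ≠ n → ‖(G r - G s) j‖ ≤ lipNorm D * dist r s := fun j hj => calc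
    ‖(G r - G s) j‖ = ‖(D r - D s) j‖ := by simp [D, hj]
    _ ≤ ‖D r - D s‖ := lp.norm_apply_le_norm ENNReal.top_ne_zero _ j
    _ ≤ lipNorm D * dist r s := hD.norm_sub_le_lipNorm_mul r s
  have hsmall : lipNorm D * dist r s < ‖G r - G s‖ := by
    rw [hGrs]
    exact mul_lt_of_lt_one_left (dist_pos.2 hrs) (hGF.trans_le hε)
  have hattains : ‖G r n - G s n‖ = dist r s := by
    rw [← hGrs, ← lp.norm_apply_eq_norm_of_forall_ne_le hsmall hoff]
    rfl
  refine ⟨fun x => G x n, IsLip0.comp heval rfl ⟨⟨KG, hKG⟩, hGz⟩, r, s, hrs, hattains, ?_, ?_,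
    hdist⟩
  · refine le_antisymm (hGnorm ▸ heval.lipNorm_comp_le hKG) ?_
    simpa [hattains, div_self (dist_pos.2 hrs).ne', Function.comp_def] using
      (heval.comp hKG).norm_sub_div_dist_le_lipNorm hrs
  · rw [hHF]
    exact (heval.lipNorm_comp_le hD).trans_lt hGF

lemma LipBPBAt.of_lp {ε δ : ℝ} (h : LipBPBAt M z (lp E ∞) ε δ) (hε : ε ≤ 1) (n : ι) :
    LipBPBAt M z (E n) ε δ := by
  intro F hF hFnorm p q hpq hFpq
  obtain ⟨K, hK⟩ := hF.1
  have hsingle := lp.isometry_single (E := E) (p := ∞) n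
  refine LipBPBApprox.of_lp_single hK hε (h _ ?_ ?_ p q hpq ?_)
  · exact IsLip0.comp hsingle.lipschitz (lp.single_zero _ _) hF
  · exact (hsingle.lipNorm_comp F).trans hFnorm
  · rwa [← lp.single_sub, lp.norm_single (by simp)]

end LipBPB

/-- Bundling the space with its instances lets one choose a whole sequence of counterexamples. -/
structure LipBPBCounterexample (M : Type*) [MetricSpace M] (z : M) (ε δ : ℝ) where
  Y : Type u
  [normedAddCommGroup : NormedAddCommGroup Y]
  [normedSpace : NormedSpace ℝ Y]
  [completeSpace : CompleteSpace Y]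
  not_lipBPBAt : ¬ LipBPBAt M z Y ε δ

attribute [instance] LipBPBCounterexample.normedAddCommGroup LipBPBCounterexample.normedSpace
  LipBPBCounterexample.completeSpace

theorem exists_uniform_lipBPBAt {M : Type*} [MetricSpace M] (z : M)
    (h : ∀ (Y : Type u) [NormedAddCommGroup Y] [NormedSpace ℝ Y] [CompleteSpace Y],
      LipBPB M z Y) {ε : ℝ} (hε : 0 < ε) :
    ∃ δ > 0, ∀ (Y : Type u) [NormedAddCommGroup Y] [NormedSpace ℝ Y] [CompleteSpace Y],
      LipBPBAt M z Y ε δ := by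
  by_contra! hbad
  have B : ∀ n : ℕ, LipBPBCounterexample.{u} M z ε (1 / ((n : ℝ) + 1)) := fun n =>
    Classical.choice <| by
      obtain ⟨Y, _, _, _, hY⟩ := hbad (1 / ((n : ℝ) + 1)) (by positivity)
      exact ⟨⟨Y, hY⟩⟩
  obtain ⟨η, hη_pos, hη⟩ := h (lp (fun n => (B n).Y) ∞)
  have hε' : 0 < min ε 1 := lt_min hε one_pos
  obtain ⟨n, hn⟩ := exists_nat_one_div_lt (hη_pos _ hε')
  have hlp : LipBPBAt M z (lp (fun n => (B n).Y) ∞) (min ε 1) (η (min ε 1)) := hη _ hε'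
  exact (B n).not_lipBPBAt <| (hlp.of_lp (min_le_right _ _) n).mono (min_le_left _ _) hn.le

theorem lipBPB_uniform_eta_general {M : Type*} [MetricSpace M] (z : M)
    (h : ∀ (Y : Type u) [NormedAddCommGroup Y] [NormedSpace ℝ Y] [CompleteSpace Y],
      LipBPB M z Y) :
    ∃ ηM : ℝ → ℝ, (∀ ε > 0, ηM ε > 0) ∧
      ∀ (Y : Type u) [NormedAddCommGroup Y] [NormedSpace ℝ Y] [CompleteSpace Y],
        LipBPBWith M z Y ηM := by
  choose! η hη_pos hη using fun ε (hε : 0 < ε) => exists_uniform_lipBPBAt z h hε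
  exact ⟨η, hη_pos, fun Y _ _ _ => ⟨hη_pos, fun ε hε => hη ε hε Y⟩⟩

/-- If `(M, Y)` has the Lip-BPB property for every Banach space `Y`, then there is a single
function `η_M`, depending only on `M`, witnessing the Lip-BPB property of `(M, Y)` for every
Banach space `Y`. -/
theorem lipBPB_uniform_eta {M : Type*} [MetricSpace M] [CompleteSpace M] (z : M)
    (h : ∀ (Y : Type u) [NormedAddCommGroup Y] [NormedSpace ℝ Y] [CompleteSpace Y],
      LipBPB M z Y) :
    ∃ ηM : ℝ → ℝ, (∀ ε > 0, ηM ε > 0) ∧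
      ∀ (Y : Type u) [NormedAddCommGroup Y] [NormedSpace ℝ Y] [CompleteSpace Y],
        LipBPBWith M z Y ηM :=
  lipBPB_uniform_eta_general z h
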